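/- arXiv:2412.12293 — 2 statements merged into one kernel-verified Lean document; each statement's English description precedes it below -/
import Mathlib

section
/- The group presented by ⟨x, y ∣ x⁻¹·y·x·y⁻¹·x·y, y⁻²·x·y·x⁻¹⟩ is the trivial group. -/
/-- Generators: `x = FreeGroup.of true`, `y = FreeGroup.of false`. -/
def acX : FreeGroup Bool := FreeGroup.of true
def acY : FreeGroup Bool := FreeGroup.of false

/-- Relators of the presentation ⟨x, y ∣ x⁻¹yxy⁻¹xy, y⁻²xyx⁻¹⟩. -/
def acRels2 : Set (FreeGroup Bool) :=
  {acX⁻¹ * acY * acX * acY⁻¹ * acX * acY,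
   acY⁻¹ * acY⁻¹ * acX * acY * acX⁻¹}

theorem presented_group_two_trivial :
    ∀ g : PresentedGroup acRels2, g = 1 := by
  set X : PresentedGroup acRels2 := PresentedGroup.of true with hX
  set Y : PresentedGroup acRels2 := PresentedGroup.of false with hYdef
  have hrel : ∀ r ∈ acRels2, PresentedGroup.mk acRels2 r = 1 := by
    intro r hr
    exact (QuotientGroup.eq_one_iff r).mpr (Subgroup.subset_normalClosure hr)
  have h1 : X⁻¹ * Y * X * Y⁻¹ * X * Y = 1 := by
    have := hrel _ (Set.mem_insert _ _)
    simpa [acX, acY, map_mul, map_inv, hX, hYdef, PresentedGroup.of] using this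
  have h2 : Y⁻¹ * Y⁻¹ * X * Y * X⁻¹ = 1 := by
    have := hrel _ (Set.mem_insert_of_mem _ rfl)
    simpa [acX, acY, map_mul, map_inv, hX, hYdef, PresentedGroup.of] using this
  have e2 : X * Y * X⁻¹ = Y * Y := by
    calc X * Y * X⁻¹ = Y * Y * (Y⁻¹ * Y⁻¹ * X * Y * X⁻¹) := by group
    _ = Y * Y := by rw [h2]; group
  have e1 : X⁻¹ * Y * X = Y⁻¹ * X⁻¹ * Y := by
    calc X⁻¹ * Y * X = (X⁻¹ * Y * X * Y⁻¹ * X * Y) * (Y⁻¹ * X⁻¹ * Y) := by group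
    _ = Y⁻¹ * X⁻¹ * Y := by rw [h1]; group
  have e3 : Y = (X * Y * X⁻¹)⁻¹ * X⁻¹ * (X * Y * X⁻¹) := by
    calc Y = X * (X⁻¹ * Y * X) * X⁻¹ := by group
    _ = X * (Y⁻¹ * X⁻¹ * Y) * X⁻¹ := by rw [e1]
    _ = (X * Y * X⁻¹)⁻¹ * X⁻¹ * (X * Y * X⁻¹) := by group
  rw [e2] at e3
  have hx : X = Y⁻¹ := by
    have h4 : X⁻¹ = (Y * Y) * ((Y * Y)⁻¹ * X⁻¹ * (Y * Y)) * (Y * Y)⁻¹ := by group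
    rw [← e3] at h4
    have h5 : X⁻¹ = Y := by rw [h4]; group
    rw [← h5]; group
  have hy : Y = 1 := by
    rw [hx] at h2
    have : Y⁻¹ = 1 := by rw [← h2]; group
    calc Y = (Y⁻¹)⁻¹ := by group
    _ = 1 := by rw [this]; group
  have hx1 : X = 1 := by rw [hx, hy]; group
  intro g
  obtain ⟨w, rfl⟩ := PresentedGroup.mk_surjective acRels2 g
  induction w with
  | C1 => exact map_one _
  | of b =>
    cases b
    · exact hy
    · exact hx1
  | inv_of x ih => rw [map_inv, ih]; group
  | mul x y ihx ihy => rw [map_mul, ihx, ihy]; group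
end

section
/- The group presented by ⟨x₃, x₄, x₅, x₆, x₇, x₉ ∣ x₄x₃⁻¹x₆, x₉⁻¹x₆x₇⁻¹x₃, x₇x₃⁻¹x₉, x₄x₅⁻¹x₉⁻¹, x₇⁻¹x₄x₅, x₆x₅⁻¹⟩ is the trivial group. -/
-- Generators x₃, x₄, x₅, x₆, x₇, x₉ of the free group on six letters.
def z3 : FreeGroup (Fin 6) := FreeGroup.of 0
def z4 : FreeGroup (Fin 6) := FreeGroup.of 1
def z5 : FreeGroup (Fin 6) := FreeGroup.of 2
def z6 : FreeGroup (Fin 6) := FreeGroup.of 3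
def z7 : FreeGroup (Fin 6) := FreeGroup.of 4
def z9 : FreeGroup (Fin 6) := FreeGroup.of 5

def relsT2 : Set (FreeGroup (Fin 6)) :=
  {z4 * z3⁻¹ * z6,
   z9⁻¹ * z6 * z7⁻¹ * z3,
   z7 * z3⁻¹ * z9,
   z4 * z5⁻¹ * z9⁻¹,
   z7⁻¹ * z4 * z5,
   z6 * z5⁻¹}

lemma mk_rel_one (r : FreeGroup (Fin 6)) (hr : r ∈ relsT2) :
    PresentedGroup.mk relsT2 r = 1 :=
  (QuotientGroup.eq_one_iff r).mpr (Subgroup.subset_normalClosure hr)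

theorem presented_group_T2_trivial :
    ∀ g : PresentedGroup relsT2, g = 1 := by
  set a := PresentedGroup.mk relsT2 z3 with ha0
  set b := PresentedGroup.mk relsT2 z4 with hb0
  set c := PresentedGroup.mk relsT2 z5 with hc0
  set d := PresentedGroup.mk relsT2 z6 with hd0
  set e := PresentedGroup.mk relsT2 z7 with he0
  set f := PresentedGroup.mk relsT2 z9 with hf0
  have r1 : b * a⁻¹ * d = 1 := by
    simpa using mk_rel_one (z4 * z3⁻¹ * z6) (by simp [relsT2])
  have r2 : f⁻¹ * d * e⁻¹ * a = 1 := by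
    simpa using mk_rel_one (z9⁻¹ * z6 * z7⁻¹ * z3) (by simp [relsT2])
  have r3 : e * a⁻¹ * f = 1 := by
    simpa using mk_rel_one (z7 * z3⁻¹ * z9) (by simp [relsT2])
  have r4 : b * c⁻¹ * f⁻¹ = 1 := by
    simpa using mk_rel_one (z4 * z5⁻¹ * z9⁻¹) (by simp [relsT2])
  have r5 : e⁻¹ * b * c = 1 := by
    simpa using mk_rel_one (z7⁻¹ * z4 * z5) (by simp [relsT2])
  have r6 : d * c⁻¹ = 1 := by
    simpa using mk_rel_one (z6 * z5⁻¹) (by simp [relsT2])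
  -- express d, c, f, e in terms of a, b
  have hD : d = a * b⁻¹ := by
    calc d = (b * a⁻¹)⁻¹ * (b * a⁻¹ * d) := by group
    _ = (b * a⁻¹)⁻¹ * 1 := by rw [r1]
    _ = a * b⁻¹ := by group
  have hC : c = a * b⁻¹ := by
    calc c = (d * c⁻¹)⁻¹ * d := by group
    _ = 1⁻¹ * d := by rw [r6]
    _ = d := by group
    _ = a * b⁻¹ := hD
  have hF : f = b * b * a⁻¹ := by
    calc f = (b * c⁻¹ * f⁻¹)⁻¹ * (b * c⁻¹) := by group
    _ = 1⁻¹ * (b * c⁻¹) := by rw [r4]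
    _ = b * c⁻¹ := by group
    _ = b * (a * b⁻¹)⁻¹ := by rw [hC]
    _ = b * b * a⁻¹ := by group
  have hE : e = b * a * b⁻¹ := by
    calc e = (b * c) * (e⁻¹ * b * c)⁻¹ := by group
    _ = (b * c) * 1⁻¹ := by rw [r5]
    _ = b * c := by group
    _ = b * (a * b⁻¹) := by rw [hC]
    _ = b * a * b⁻¹ := by group
  have hE2 : e = a * b⁻¹ * b⁻¹ * a := by
    calc e = (e * a⁻¹ * f) * f⁻¹ * a := by group
    _ = 1 * f⁻¹ * a := by rw [r3]
    _ = f⁻¹ * a := by group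
    _ = (b * b * a⁻¹)⁻¹ * a := by rw [hF]
    _ = a * b⁻¹ * b⁻¹ * a := by group
  have k1 : b * b * b = a * a := by
    have h : a⁻¹ * (f⁻¹ * d * e⁻¹ * a) * a⁻¹ = a⁻¹ * 1 * a⁻¹ := by rw [r2]
    rw [hD, hE, hF] at h
    calc b * b * b
        = (a⁻¹ * ((b * b * a⁻¹)⁻¹ * (a * b⁻¹) * (b * a * b⁻¹)⁻¹ * a) * a⁻¹)⁻¹ := by group; simp [zpow_ofNat, pow_succ, pow_one]
    _ = (a⁻¹ * 1 * a⁻¹)⁻¹ := by rw [h]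
    _ = a * a := by group; simp [zpow_ofNat, pow_succ, pow_one]
  have k2 : b * a * b⁻¹ = a * b⁻¹ * b⁻¹ * a := hE.symm.trans hE2
  have k3 : b * a * b⁻¹ = a * b * a⁻¹ := by
    calc b * a * b⁻¹ = a * b⁻¹ * b⁻¹ * a := k2
    _ = a * b * (b * b * b)⁻¹ * a := by group
    _ = a * b * (a * a)⁻¹ * a := by rw [k1]
    _ = a * b * a⁻¹ := by group
  have k5 : a * (b * b) * a⁻¹ = a * a := by
    calc a * (b * b) * a⁻¹ = (a * b * a⁻¹) * (a * b * a⁻¹) := by group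
    _ = (b * a * b⁻¹) * (b * a * b⁻¹) := by rw [k3]
    _ = b * (a * a) * b⁻¹ := by group
    _ = b * (b * b * b) * b⁻¹ := by rw [← k1]
    _ = b * b * b := by group
    _ = a * a := k1
  have hbb : b * b = a * a := by
    calc b * b = a⁻¹ * (a * (b * b) * a⁻¹) * a := by group
    _ = a⁻¹ * (a * a) * a := by rw [k5]
    _ = a * a := by group
  have hb : b = 1 := by
    have h : b * (b * b) = 1 * (b * b) := by
      rw [one_mul, ← mul_assoc, k1, ← hbb]
    exact mul_right_cancel h
  have ha : a = 1 := by
    have h := k2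
    rw [hb] at h
    simp at h
    have h2 : a * 1 = a * a := by simpa using h
    exact (mul_left_cancel h2).symm
  have hd : d = 1 := by rw [hD, ha, hb]; group
  have hc : c = 1 := by rw [hC, ha, hb]; group
  have hf : f = 1 := by rw [hF, ha, hb]; group
  have he : e = 1 := by rw [hE, ha, hb]; group
  intro g
  induction g using PresentedGroup.induction_on with
  | _ z =>
    induction z using FreeGroup.induction_on with
    | C1 => simp
    | of i =>
      fin_cases i
      · exact ha
      · exact hb
      · exact hc
      · exact hd
      · exact he
      · exact hf
    | inv_of i ih => rw [map_inv, ih, inv_one]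
    | mul x y ihx ihy => rw [map_mul, ihx, ihy, one_mul]
end
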